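/- arXiv:2509.18911 — 2 statements merged into one kernel-verified Lean document; each statement's English description precedes it below -/
import Mathlib

section
/- Let Q be a symmetric n×n matrix, let λ_min be its smallest eigenvalue, and suppose λ_min < 0. Then for α ≥ -λ_min, the function x ↦ xᵀ Q x + dᵀ x + α · Σ_j (x_j - l_j)(x_j - u_j) is convex on ℝ^n, and for all x with l_j ≤ x_j ≤ u_j (all j), its value is at most xᵀ Q x + dᵀ x. -/
/-! Expanding the box term, the function is the quadratic form of `Q + α • 1` plus an affine
function, and `Q + α • 1` is positive semidefinite since its eigenvalues `λᵢ + α` are nonnegative.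
On the box every factor product `(xⱼ - lⱼ) (xⱼ - uⱼ)` is nonpositive and `α > 0`. -/

open Matrix

open scoped ComplexOrder in
theorem Matrix.IsHermitian.posSemidef_add_smul_one {n 𝕜 : Type*} [Fintype n] [DecidableEq n]
    [RCLike 𝕜] {A : Matrix n n 𝕜} (hA : A.IsHermitian) {c : ℝ}
    (h : ∀ i, 0 ≤ hA.eigenvalues i + c) : (A + c • 1).PosSemidef := by
  have hAc : (A + c • 1).IsHermitian := hA.add (by simp [IsHermitian, conjTranspose_smul])
  have h_alg : A + c • (1 : Matrix n n 𝕜) = A + algebraMap 𝕜 _ (c : 𝕜) := by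
    rw [Algebra.algebraMap_eq_smul_one, RCLike.real_smul_eq_coe_smul (K := 𝕜)]
  refine posSemidef_iff_isHermitian_and_spectrum_nonneg.mpr ⟨hAc, ?_⟩
  rw [h_alg, ← spectrum.add_singleton_eq, hA.spectrum_eq_image_range]
  rintro _ ⟨_, ⟨_, ⟨i, rfl⟩, rfl⟩, _, rfl, rfl⟩
  change 0 ≤ ((hA.eigenvalues i : ℝ) : 𝕜) + (c : 𝕜)
  exact_mod_cast h i

theorem Matrix.PosSemidef.convexOn_quadratic {ι : Type*} [Fintype ι] {M : Matrix ι ι ℝ}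
    (hM : M.PosSemidef) (c : ι → ℝ) (k : ℝ) :
    ConvexOn ℝ Set.univ (fun x : ι → ℝ => x ⬝ᵥ M *ᵥ x + c ⬝ᵥ x + k) := by
  refine ⟨convex_univ, fun x _ y _ a b ha hb hab => sub_nonneg.mp ?_⟩
  obtain rfl : b = 1 - a := eq_sub_of_add_eq' hab
  have h_defect : a • (x ⬝ᵥ M *ᵥ x + c ⬝ᵥ x + k) + (1 - a) • (y ⬝ᵥ M *ᵥ y + c ⬝ᵥ y + k)
      - ((a • x + (1 - a) • y) ⬝ᵥ M *ᵥ (a • x + (1 - a) • y) + c ⬝ᵥ (a • x + (1 - a) • y) + k)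
      = a * (1 - a) * ((x - y) ⬝ᵥ M *ᵥ (x - y)) := by
    simp only [mulVec_add, mulVec_sub, mulVec_smul, dotProduct_add, dotProduct_sub, add_dotProduct,
      sub_dotProduct, dotProduct_smul, smul_dotProduct, smul_eq_mul]
    ring
  rw [h_defect]
  have h_nonneg : 0 ≤ (x - y) ⬝ᵥ M *ᵥ (x - y) := by
    simpa using hM.dotProduct_mulVec_nonneg (x - y)
  exact mul_nonneg (mul_nonneg ha hb) h_nonneg

theorem sum_sub_mul_sub_eq {ι : Type*} [Fintype ι] (x l u : ι → ℝ) :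
    ∑ j, (x j - l j) * (x j - u j) = x ⬝ᵥ x - (l + u) ⬝ᵥ x + l ⬝ᵥ u := by
  simp only [dotProduct, Pi.add_apply, ← Finset.sum_sub_distrib, ← Finset.sum_add_distrib]
  exact Finset.sum_congr rfl fun j _ => by ring

theorem sum_sub_mul_sub_nonpos {ι : Type*} [Fintype ι] {x l u : ι → ℝ}
    (hx : ∀ j, l j ≤ x j ∧ x j ≤ u j) : ∑ j, (x j - l j) * (x j - u j) ≤ 0 :=
  Finset.sum_nonpos fun j _ =>
    mul_nonpos_of_nonneg_of_nonpos (sub_nonneg.mpr (hx j).1) (sub_nonpos.mpr (hx j).2)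

theorem alphaBB_convex_underestimator_general (n : ℕ) (Q : Matrix (Fin n) (Fin n) ℝ)
    (hQ : Q.IsHermitian) (d l u : Fin n → ℝ) (lammin α : ℝ)
    (hmin_le : ∀ i, lammin ≤ hQ.eigenvalues i)
    (hneg : lammin < 0) (hα : -lammin ≤ α) :
    ConvexOn ℝ Set.univ
      (fun x : Fin n → ℝ =>
        x ⬝ᵥ Q.mulVec x + d ⬝ᵥ x + α * ∑ j, (x j - l j) * (x j - u j)) ∧
    ∀ x : Fin n → ℝ, (∀ j, l j ≤ x j ∧ x j ≤ u j) →
      x ⬝ᵥ Q.mulVec x + d ⬝ᵥ x + α * ∑ j, (x j - l j) * (x j - u j) ≤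
        x ⬝ᵥ Q.mulVec x + d ⬝ᵥ x := by
  constructor
  · have hPSD : (Q + α • 1).PosSemidef :=
      hQ.posSemidef_add_smul_one fun i => by linarith [hmin_le i]
    convert hPSD.convexOn_quadratic (d - α • (l + u)) (α * (l ⬝ᵥ u)) using 2 with x
    simp only [sum_sub_mul_sub_eq, add_mulVec, smul_mulVec, one_mulVec, dotProduct_add,
      sub_dotProduct, dotProduct_smul, smul_dotProduct, smul_eq_mul]
    ring
  · intro x hx
    have hα_nonneg : 0 ≤ α := by linarith
    linarith [mul_nonpos_of_nonneg_of_nonpos hα_nonneg (sum_sub_mul_sub_nonpos hx)]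

/-- α-BB convexification: if `λmin` is the smallest eigenvalue of the symmetric matrix `Q`
and `λmin < 0`, then for `α ≥ -λmin` the perturbed quadratic
`x ↦ xᵀ Q x + dᵀ x + α Σⱼ (xⱼ - lⱼ)(xⱼ - uⱼ)` is convex on `ℝⁿ` and underestimates
`xᵀ Q x + dᵀ x` on the box `[l, u]`. -/
theorem alphaBB_convex_underestimator (n : ℕ) (Q : Matrix (Fin n) (Fin n) ℝ)
    (hQ : Q.IsHermitian) (d l u : Fin n → ℝ) (lammin α : ℝ)
    (hmin_le : ∀ i, lammin ≤ hQ.eigenvalues i)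
    (hmin_mem : ∃ i, hQ.eigenvalues i = lammin)
    (hneg : lammin < 0) (hα : -lammin ≤ α) :
    ConvexOn ℝ Set.univ
      (fun x : Fin n → ℝ =>
        x ⬝ᵥ Q.mulVec x + d ⬝ᵥ x + α * ∑ j, (x j - l j) * (x j - u j)) ∧
    ∀ x : Fin n → ℝ, (∀ j, l j ≤ x j ∧ x j ≤ u j) →
      x ⬝ᵥ Q.mulVec x + d ⬝ᵥ x + α * ∑ j, (x j - l j) * (x j - u j) ≤
        x ⬝ᵥ Q.mulVec x + d ⬝ᵥ x :=
  alphaBB_convex_underestimator_general n Q hQ d l u lammin α hmin_le hneg hα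
end

section
/- Let G be a chordal graph on vertex set V and let C_1, …, C_p be its maximal cliques. A symmetric matrix X indexed by V, with X_{ij} = 0 whenever i ≠ j and {i,j} is not an edge of G, is positive semidefinite if and only if X can be written as X = Σ_{k=1}^p E_k^ᵀ X_k E_k, where each X_k is a positive semidefinite matrix of size |C_k| and E_k is the 0/1 matrix selecting the rows/columns indexed by C_k. -/
/-
Sufficiency is immediate, since each `E_Cᵀ Y E_C` is a congruence of a positive semidefinite
matrix. For necessity, eliminate the vertices one at a time. A chordal graph has a simplicial
vertex `v` (Dirac): a minimal separator of two non-adjacent vertices is a clique, for otherwise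
two shortest paths between two of its vertices, one through each side, would close up to a
chordless cycle of length at least four. Subtracting the rank-one term `X_v X_vᵀ / X_vv` from
`X` leaves the Schur complement, which is positive semidefinite, has the same sparsity pattern
and no longer involves `v`, while the subtracted term is positive semidefinite and supported
on the clique `{v} ∪ N(v)`. By induction `X` is a sum of positive semidefinite matrices
supported on cliques, and each clique lies in a maximal one.
-/

open Matrix

/-- A graph is chordal if every cycle of length at least 4 has a chord. -/
def IsChordal {V : Type*} (G : SimpleGraph V) : Prop :=
  ∀ n : ℕ, 4 ≤ n → ∀ f : ZMod n → V, Function.Injective f →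
    (∀ i, G.Adj (f i) (f (i + 1))) →
    ∃ i j : ZMod n, j ≠ i ∧ j ≠ i + 1 ∧ j ≠ i - 1 ∧ G.Adj (f i) (f j)

/-- The `|V| × |V|` matrix `E_kᵀ X_k E_k` obtained by embedding a matrix indexed by a
finite set of vertices `C` into the rows/columns indexed by `C`, with zeros elsewhere. -/
def cliqueEmbed {V : Type*} [Fintype V] [DecidableEq V] (C : Finset V)
    (Y : Matrix C C ℝ) : Matrix V V ℝ :=
  Matrix.of fun i j =>
    if hi : i ∈ C then (if hj : j ∈ C then Y ⟨i, hi⟩ ⟨j, hj⟩ else 0) else 0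

namespace SimpleGraph

variable {V : Type*} {G : SimpleGraph V}

/-- The subgraph induced on `s`, kept on the whole vertex type: vertices outside `s` become
isolated. -/
def restrict (G : SimpleGraph V) (s : Set V) : SimpleGraph V where
  Adj u v := G.Adj u v ∧ u ∈ s ∧ v ∈ s
  symm.symm _ _ h := ⟨h.1.symm, h.2.2, h.2.1⟩

@[simp]
theorem restrict_adj {s : Set V} {u v : V} :
    (G.restrict s).Adj u v ↔ G.Adj u v ∧ u ∈ s ∧ v ∈ s :=
  Iff.rfl

theorem restrict_le (s : Set V) : G.restrict s ≤ G := fun _ _ h => (restrict_adj.mp h).1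

theorem Reachable.mem_of_restrict {s : Set V} {u v : V} (h : (G.restrict s).Reachable u v)
    (hu : u ∈ s) : v ∈ s := by
  by_contra hv
  obtain ⟨p⟩ := h
  obtain ⟨d, -, -, hd⟩ := p.exists_boundary_dart s hu hv
  exact hd (restrict_adj.mp d.adj).2.2

theorem Walk.getVert_mem_of_restrict {s : Set V} {u v : V} (p : (G.restrict s).Walk u v)
    (hu : u ∈ s) (i : ℕ) : p.getVert i ∈ s :=
  (p.take i).reachable.mem_of_restrict hu

theorem Reachable.restrict_component {a u : V} (h : G.Reachable a u) :
    (G.restrict {w | G.Reachable a w}).Reachable a u := by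
  obtain ⟨p⟩ := h
  suffices ∀ {w} (q : G.Walk w u), G.Reachable a w →
      (G.restrict {w | G.Reachable a w}).Reachable w u from this p .rfl
  clear p
  intro w q hw
  induction q with
  | nil => exact .rfl
  | cons hadj q ih =>
    have hw' := hw.trans hadj.reachable
    exact (restrict_adj.mpr ⟨hadj, hw, hw'⟩).reachable.trans (ih hw')

def Walk.IsChordlessPath {u v : V} (p : G.Walk u v) : Prop :=
  ∀ ⦃i j⦄, i < j → j ≤ p.length →
    p.getVert i ≠ p.getVert j ∧ (G.Adj (p.getVert i) (p.getVert j) → j = i + 1)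

/-- A chord of a shortest walk would shortcut it. -/
theorem Walk.eq_succ_of_adj_getVert {u v : V} {p : G.Walk u v} (hp : p.length = G.dist u v)
    {i j : ℕ} (hij : i < j) (hj : j ≤ p.length) (hadj : G.Adj (p.getVert i) (p.getVert j)) :
    j = i + 1 := by
  have hdist : G.dist u (p.getVert j) = j := by
    rw [← length_eq_dist_of_subwalk hp (p.isSubwalk_take j), take_length]
    omega
  have := dist_le ((p.take i).concat hadj)
  rw [length_concat, take_length, hdist] at this
  omega

theorem Walk.isChordlessPath_mapLe_of_length_eq_dist {s : Set V} {u v : V}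
    {p : (G.restrict s).Walk u v} (hu : u ∈ s) (hp : p.length = (G.restrict s).dist u v) :
    (p.mapLe (restrict_le s)).IsChordlessPath := by
  intro i j hij hj
  simp only [Walk.length_mapLe, Walk.getVert_map, Hom.coe_ofLE, id] at hj ⊢
  refine ⟨fun h => hij.ne ((p.isPath_of_length_eq_dist hp).getVert_injOn
    (by simp; omega) hj h), fun hadj => ?_⟩
  exact eq_succ_of_adj_getVert hp hij hj
    (restrict_adj.mpr ⟨hadj, p.getVert_mem_of_restrict hu i, p.getVert_mem_of_restrict hu j⟩)

theorem Reachable.exists_isChordlessPath {A : Set V} {x y : V}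
    (h : (G.restrict (A ∪ {x, y})).Reachable x y) :
    ∃ P : G.Walk x y, P.IsChordlessPath ∧ ∀ i, 0 < i → i < P.length → P.getVert i ∈ A := by
  obtain ⟨p, hp⟩ := h.exists_walk_length_eq_dist
  have hP := Walk.isChordlessPath_mapLe_of_length_eq_dist (.inr (by simp)) hp
  refine ⟨_, hP, fun i hi hi' => ?_⟩
  rw [Walk.length_mapLe] at hi'
  have hne {j k : ℕ} (hjk : j < k) (hk : k ≤ p.length) : p.getVert j ≠ p.getVert k := by
    simpa using (hP hjk (by simpa using hk)).1
  simp only [Walk.getVert_map, Hom.coe_ofLE, id]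
  rcases p.getVert_mem_of_restrict (.inr (by simp)) i with h | h | h
  · exact h
  · exact absurd (h.trans p.getVert_zero.symm) (hne hi (by omega)).symm
  · exact absurd (h.trans p.getVert_length.symm) (hne hi' le_rfl)

theorem exists_reachable_adj_of_not_reachable {T S : Set V} {a b x : V} (ha : a ∈ T \ S)
    (hab : ¬ (G.restrict (T \ S)).Reachable a b)
    (hx : (G.restrict (T \ (S \ {x}))).Reachable a b) :
    ∃ u, (G.restrict (T \ S)).Reachable a u ∧ G.Adj u x := by
  obtain ⟨p⟩ := hx
  obtain ⟨d, -, hfst, hsnd⟩ :=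
    p.exists_boundary_dart {w | (G.restrict (T \ S)).Reachable a w} .rfl hab
  obtain ⟨hadj, -, hsnd'⟩ := restrict_adj.mp d.adj
  by_cases hS : d.snd ∈ S
  · have : d.snd = x := by_contra fun h => hsnd'.2 ⟨hS, h⟩
    exact ⟨d.fst, hfst, by rwa [this] at hadj⟩
  · have hfst' : d.fst ∈ T \ S := hfst.mem_of_restrict ha
    exact absurd (hfst.trans (restrict_adj.mpr ⟨hadj, hfst', hsnd'.1, hS⟩).reachable) hsnd

theorem reachable_restrict_component_union {H : SimpleGraph V} (hH : H ≤ G) {c u w x y : V}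
    (hu : H.Reachable c u) (hw : H.Reachable c w) (hxu : G.Adj x u) (hwy : G.Adj w y) :
    (G.restrict ({z | H.Reachable c z} ∪ {x, y})).Reachable x y := by
  have hle : H.restrict {z | H.Reachable c z} ≤ G.restrict ({z | H.Reachable c z} ∪ {x, y}) :=
    fun _ _ h => restrict_adj.mpr ⟨hH (restrict_adj.mp h).1, .inl (restrict_adj.mp h).2.1,
      .inl (restrict_adj.mp h).2.2⟩
  have huw := (hu.restrict_component.symm.trans hw.restrict_component).mono hle
  refine (Adj.reachable ?_).trans (huw.trans (Adj.reachable ?_))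
  · exact restrict_adj.mpr ⟨hxu, .inr (by simp), .inl hu⟩
  · exact restrict_adj.mpr ⟨hwy, .inl hw, .inr (by simp)⟩

theorem exists_minimal_separator {T : Finset V} {a b : V} (hab : a ≠ b) (hnadj : ¬ G.Adj a b) :
    ∃ S : Finset V, a ∉ S ∧ b ∉ S ∧ ¬ (G.restrict (↑T \ ↑S)).Reachable a b ∧
      ∀ x ∈ (S : Set V), (G.restrict (↑T \ (↑S \ {x}))).Reachable a b := by
  classical
  set separators := ((T.erase a).erase b).powerset.filter
    fun S : Finset V => ¬ (G.restrict (↑T \ ↑S)).Reachable a b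
  have hfull : (T.erase a).erase b ∈ separators := by
    refine Finset.mem_filter.mpr ⟨Finset.mem_powerset_self _, fun ⟨p⟩ => ?_⟩
    obtain ⟨d, -, hfst, hsnd⟩ := p.exists_boundary_dart {a} rfl (by simpa using hab.symm)
    obtain ⟨hadj, -, hT, hS⟩ := restrict_adj.mp d.adj
    have : d.snd = b := by_contra fun h => hS (by simpa [h, hsnd] using hT)
    rw [Set.mem_singleton_iff.mp hfst, this] at hadj
    exact hnadj hadj
  obtain ⟨S, hS, hmin⟩ := separators.exists_min_image Finset.card ⟨_, hfull⟩
  obtain ⟨hSsub, hSsep⟩ := Finset.mem_filter.mp hS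
  have hSsub' := Finset.mem_powerset.mp hSsub
  refine ⟨S, fun h => by simpa using hSsub' h, fun h => by simpa using hSsub' h, hSsep,
    fun x hx => by_contra fun hsep => ?_⟩
  have := hmin (S.erase x) (Finset.mem_filter.mpr ⟨Finset.mem_powerset.mpr
    ((S.erase_subset x).trans hSsub'), by rwa [Finset.coe_erase]⟩)
  have := Finset.card_erase_lt_of_mem (Finset.mem_coe.mp hx)
  omega

theorem neighborSet_inter_subset_of_reachable {T S : Set V} {a u : V} (ha : a ∈ T \ S)
    (hu : (G.restrict (T \ S)).Reachable a u) :
    G.neighborSet u ∩ T ⊆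
      G.neighborSet u ∩ {w | (G.restrict (T \ S)).Reachable a w ∨ w ∈ S} := by
  rintro w ⟨hadj, hw⟩
  refine ⟨hadj, or_iff_not_imp_right.mpr fun hS => hu.trans ?_⟩
  exact (restrict_adj.mpr ⟨hadj, hu.mem_of_restrict ha, hw, hS⟩).reachable

/-- The inductive step of Dirac's lemma, on the side of `a` of the clique separator `S`: of a
non-adjacent simplicial pair, at most one vertex lies in `S`. -/
theorem exists_reachable_simplicial {T S T' : Finset V} {a : V} (ha : a ∈ (T : Set V) \ S)
    (hS : G.IsClique (S : Set V))
    (hT' : ∀ w, w ∈ T' ↔ w ∈ T ∧ ((G.restrict (↑T \ ↑S)).Reachable a w ∨ w ∈ S))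
    (hdirac : G.IsClique (T' : Set V) ∨ ∃ s ∈ T', ∃ t ∈ T', s ≠ t ∧ ¬ G.Adj s t ∧
        G.IsClique (G.neighborSet s ∩ T') ∧ G.IsClique (G.neighborSet t ∩ T')) :
    ∃ u, (G.restrict (↑T \ ↑S)).Reachable a u ∧ G.IsClique (G.neighborSet u ∩ T) := by
  have lift {u : V} (hu : (G.restrict (↑T \ ↑S)).Reachable a u)
      (h : G.IsClique (G.neighborSet u ∩ T')) : G.IsClique (G.neighborSet u ∩ T) :=
    h.subset fun w hw => by
      have := neighborSet_inter_subset_of_reachable ha hu hw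
      exact ⟨this.1, (hT' w).mpr ⟨hw.2, this.2⟩⟩
  rcases hdirac with hcl | ⟨s, hs, t, ht, hst, hnadj, hs', ht'⟩
  · exact ⟨a, .rfl, lift .rfl (hcl.subset Set.inter_subset_right)⟩
  rw [hT'] at hs ht
  rcases hs.2 with hsa | hsS
  · exact ⟨s, hsa, lift hsa hs'⟩
  rcases ht.2 with hta | htS
  · exact ⟨t, hta, lift hta ht'⟩
  exact absurd (hS hsS htS hst) hnadj

theorem exists_subset_of_isClique [Finite V] {ι : Type*} {C : ι → Set V}
    (hall : ∀ s : Set V, G.IsClique s → (∀ t : Set V, G.IsClique t → s ⊆ t → t = s) →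
      ∃ k, s = C k)
    {D : Set V} (hD : G.IsClique D) : ∃ k, D ⊆ C k := by
  obtain ⟨M, hDM, hM⟩ := Finite.exists_le_maximal (p := G.IsClique) hD
  obtain ⟨k, hk⟩ := hall M hM.prop fun t ht hMt => hM.eq_of_superset ht hMt
  exact ⟨k, hk ▸ hDM⟩

end SimpleGraph

namespace IsChordal

open SimpleGraph

variable {V : Type*} {G : SimpleGraph V}

theorem exists_chord (hG : IsChordal G) {u : V} (p : G.Walk u u) (hlen : 4 ≤ p.length)
    (hinj : Set.InjOn p.getVert {i | i < p.length}) :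
    ∃ i j, i + 1 < j ∧ j < p.length ∧ (i = 0 → j + 1 < p.length) ∧
      G.Adj (p.getVert i) (p.getVert j) := by
  set n := p.length
  have : NeZero n := ⟨by omega⟩
  have : Fact (1 < n) := ⟨by omega⟩
  have val_succ (a : ZMod n) : (a + 1).val = (a.val + 1) % n := by
    rw [ZMod.val_add, ZMod.val_one]
  have getVert_val_succ (a : ZMod n) : p.getVert (a + 1).val = p.getVert (a.val + 1) := by
    rw [val_succ]
    rcases (show a.val + 1 ≤ n from ZMod.val_lt a).lt_or_eq with h | h
    · rw [Nat.mod_eq_of_lt h]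
    · rw [h, Nat.mod_self, Walk.getVert_zero, Walk.getVert_length]
  have far_apart (a b : ZMod n) (hab : a.val < b.val) (h₁ : b ≠ a + 1) (h₂ : a ≠ b + 1) :
      a.val + 1 < b.val ∧ (a.val = 0 → b.val + 1 < n) := by
    have hb := ZMod.val_lt b
    refine ⟨by_contra fun h => h₁ (ZMod.val_injective n ?_), fun ha =>
      by_contra fun h => h₂ (ZMod.val_injective n ?_)⟩
    · rw [val_succ, Nat.mod_eq_of_lt (by omega)]
      omega
    · rw [val_succ, show b.val + 1 = n by omega, Nat.mod_self, ha]
  obtain ⟨i, j, hji, hji₁, hji₂, hadj⟩ := hG n hlen (fun a => p.getVert a.val)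
    (fun a b h => ZMod.val_injective n (hinj (ZMod.val_lt a) (ZMod.val_lt b) h))
    (fun a => getVert_val_succ a ▸ p.adj_getVert_succ (ZMod.val_lt a))
  have hij₂ : i ≠ j + 1 := fun h => hji₂ (eq_sub_of_add_eq h.symm)
  rcases lt_trichotomy i.val j.val with h | h | h
  · obtain ⟨h₁, h₂⟩ := far_apart i j h hji₁ hij₂
    exact ⟨i.val, j.val, h₁, ZMod.val_lt j, h₂, hadj⟩
  · exact absurd (ZMod.val_injective n h).symm hji
  · obtain ⟨h₁, h₂⟩ := far_apart j i h hij₂ hji₁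
    exact ⟨j.val, i.val, h₁, ZMod.val_lt i, h₂, hadj.symm⟩

/-- Otherwise `P` followed by `Q` is a chordless cycle of length at least four. -/
theorem adj_of_isChordlessPath (hG : IsChordal G) {x y : V} (hxy : x ≠ y)
    {P : G.Walk x y} {Q : G.Walk y x} (hP : P.IsChordlessPath) (hQ : Q.IsChordlessPath)
    (hPQ : ∀ i j, 0 < i → i < P.length → 0 < j → j < Q.length →
      P.getVert i ≠ Q.getVert j ∧ ¬ G.Adj (P.getVert i) (Q.getVert j)) :
    G.Adj x y := by
  by_contra hnadj
  have two_le {a b : V} (R : G.Walk a b) (hab : a ≠ b) (hnadj : ¬ G.Adj a b) :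
      2 ≤ R.length := by
    by_contra h
    interval_cases hR : R.length
    exacts [hab (Walk.eq_of_length_eq_zero hR), hnadj (Walk.adj_of_length_eq_one hR)]
  have hPlen := two_le P hxy hnadj
  have hQlen := two_le Q hxy.symm fun h => hnadj h.symm
  set W := P.append Q
  set n := W.length
  have hn : n = P.length + Q.length := Walk.length_append P Q
  have hWP {k : ℕ} (hk : k ≤ P.length) : W.getVert k = P.getVert k := by
    rw [Walk.getVert_append', if_pos hk]
  have hWQ {k : ℕ} (hk : P.length ≤ k) : W.getVert k = Q.getVert (k - P.length) := by
    rw [Walk.getVert_append, if_neg (by omega)]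
  have cycle : ∀ i j, i < j → j < n → W.getVert i ≠ W.getVert j ∧
      (G.Adj (W.getVert i) (W.getVert j) → j = i + 1 ∨ (i = 0 ∧ j + 1 = n)) := by
    intro i j hij hjn
    by_cases hjP : j ≤ P.length
    · rw [hWP (by omega), hWP hjP]
      exact (hP hij hjP).imp_right fun h hadj => .inl (h hadj)
    by_cases hiP : P.length ≤ i
    · rw [hWQ hiP, hWQ (by omega)]
      exact (hQ (i := i - P.length) (j := j - P.length) (by omega) (by omega)).imp_right
        fun h hadj => .inl (by have := h hadj; omega)
    rcases Nat.eq_zero_or_pos i with rfl | hi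
    · rw [Walk.getVert_zero, hWQ (by omega)]
      have := hQ (i := j - P.length) (j := Q.length) (by omega) le_rfl
      rw [Walk.getVert_length] at this
      exact ⟨this.1.symm, fun hadj => .inr ⟨rfl, by have := this.2 hadj.symm; omega⟩⟩
    · rw [hWP (by omega), hWQ (by omega)]
      exact (hPQ i (j - P.length) hi (by omega) (by omega) (by omega)).imp_right
        fun h hadj => absurd hadj h
  have hinj : Set.InjOn W.getVert {i | i < n} := by
    intro i hi j hj h
    rcases lt_trichotomy i j with hij | rfl | hij
    exacts [absurd h (cycle i j hij hj).1, rfl, absurd h.symm (cycle j i hij hi).1]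
  obtain ⟨i, j, hij, hjn, hwrap, hadj⟩ := hG.exists_chord W (by omega) hinj
  rcases (cycle i j (by omega) hjn).2 hadj with h | ⟨rfl, h⟩
  · omega
  · have := hwrap rfl
    omega

theorem isClique_of_minimal_separator (hG : IsChordal G) {T S : Set V} {a b : V}
    (ha : a ∈ T \ S) (hb : b ∈ T \ S) (hab : ¬ (G.restrict (T \ S)).Reachable a b)
    (hmin : ∀ x ∈ S, (G.restrict (T \ (S \ {x}))).Reachable a b) : G.IsClique S := by
  intro x hx y hy hxy
  set H := G.restrict (T \ S)
  have separated {u w : V} (hu : H.Reachable a u) (hw : H.Reachable b w) :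
      u ≠ w ∧ ¬ G.Adj u w := by
    refine ⟨fun h => hab (hu.trans (h ▸ hw.symm)), fun hadj => hab ?_⟩
    exact (hu.trans (restrict_adj.mpr ⟨hadj, hu.mem_of_restrict ha,
      hw.mem_of_restrict hb⟩).reachable).trans hw.symm
  have through {c d : V} (hc : c ∈ T \ S) (hcd : ¬ H.Reachable c d)
      (hmin : ∀ z ∈ S, (G.restrict (T \ (S \ {z}))).Reachable c d) :
      (G.restrict ({z | H.Reachable c z} ∪ {x, y})).Reachable x y := by
    obtain ⟨u, hu, hux⟩ := exists_reachable_adj_of_not_reachable hc hcd (hmin x hx)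
    obtain ⟨w, hw, hwy⟩ := exists_reachable_adj_of_not_reachable hc hcd (hmin y hy)
    exact reachable_restrict_component_union (restrict_le _) hu hw hux.symm hwy
  obtain ⟨P, hP, hPA⟩ := (through ha hab hmin).exists_isChordlessPath
  obtain ⟨Q, hQ, hQB⟩ := (Set.pair_comm x y ▸ (through hb (fun h => hab h.symm)
    fun z hz => (hmin z hz).symm).symm).exists_isChordlessPath
  exact hG.adj_of_isChordlessPath hxy hP hQ fun i j hi hi' hj hj' =>
    separated (hPA i hi hi') (hQB j hj hj')

/-- Dirac's lemma for the subgraph induced on `T`. -/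
theorem isClique_or_exists_simplicial_pair (hG : IsChordal G) (T : Finset V) :
    G.IsClique (T : Set V) ∨ ∃ s ∈ T, ∃ t ∈ T, s ≠ t ∧ ¬ G.Adj s t ∧
      G.IsClique (G.neighborSet s ∩ T) ∧ G.IsClique (G.neighborSet t ∩ T) := by
  classical
  induction T using Finset.strongInduction with | H T ih =>
  by_cases hT : G.IsClique (T : Set V)
  · exact .inl hT
  obtain ⟨a, ha, b, hb, hab, hnadj⟩ : ∃ a ∈ T, ∃ b ∈ T, a ≠ b ∧ ¬ G.Adj a b := by
    simpa [isClique_iff, Set.Pairwise] using hT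
  obtain ⟨S, haS, hbS, hsep, hmin⟩ := exists_minimal_separator (T := T) hab hnadj
  have hS := hG.isClique_of_minimal_separator ⟨ha, haS⟩ ⟨hb, hbS⟩ hsep hmin
  set H := G.restrict (↑T \ ↑S)
  have side {c d : V} (hc : c ∈ T) (hcS : c ∉ S) (hd : d ∈ T) (hdS : d ∉ S)
      (hcd : ¬ H.Reachable c d) : ∃ u, H.Reachable c u ∧ G.IsClique (G.neighborSet u ∩ T) := by
    refine exists_reachable_simplicial ⟨hc, hcS⟩ hS (T' := {w ∈ T | H.Reachable c w ∨ w ∈ S})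
      (fun _ => Finset.mem_filter) (ih _ (Finset.filter_ssubset.mpr ⟨d, hd, ?_⟩))
    rintro (h | h)
    exacts [hcd h, hdS h]
  obtain ⟨u, hu, hu'⟩ := side ha haS hb hbS hsep
  obtain ⟨w, hw, hw'⟩ := side hb hbS ha haS fun h => hsep h.symm
  have hu_mem : u ∈ (T : Set V) \ S := hu.mem_of_restrict ⟨ha, haS⟩
  have hw_mem : w ∈ (T : Set V) \ S := hw.mem_of_restrict ⟨hb, hbS⟩
  refine .inr ⟨u, hu_mem.1, w, hw_mem.1, ?_, fun hadj => ?_, hu', hw'⟩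
  · rintro rfl
    exact hsep (hu.trans hw.symm)
  · exact hsep (hu.trans ((restrict_adj.mpr ⟨hadj, hu_mem, hw_mem⟩).reachable.trans hw.symm))

theorem exists_simplicial (hG : IsChordal G) {T : Finset V} (hT : T.Nonempty) :
    ∃ v ∈ T, G.IsClique (G.neighborSet v ∩ T) := by
  rcases hG.isClique_or_exists_simplicial_pair T with hcl | ⟨s, hs, -, -, -, -, hs', -⟩
  · obtain ⟨v, hv⟩ := hT
    exact ⟨v, hv, hcl.subset Set.inter_subset_right⟩
  · exact ⟨s, hs, hs'⟩

end IsChordal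

namespace Matrix

variable {n : Type*}

/-- The rank-one term `X_v X_vᵀ / X_vv` removed by eliminating the pivot `v`. When `X v v = 0`
it is `0` (as `0⁻¹ = 0`); for positive semidefinite `X` the row of `v` then vanishes anyway. -/
noncomputable def pivotTerm (X : Matrix n n ℝ) (v : n) : Matrix n n ℝ :=
  (X v v)⁻¹ • vecMulVec (X v) (X v)

theorem pivotTerm_apply (X : Matrix n n ℝ) (v i j : n) :
    X.pivotTerm v i j = (X v v)⁻¹ * (X v i * X v j) := rfl

theorem pivotTerm_apply_ne_zero {X : Matrix n n ℝ} {v i j : n} (h : X.pivotTerm v i j ≠ 0) :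
    X v i ≠ 0 ∧ X v j ≠ 0 := by
  rw [pivotTerm_apply] at h
  exact ⟨left_ne_zero_of_mul (right_ne_zero_of_mul h),
    right_ne_zero_of_mul (right_ne_zero_of_mul h)⟩

variable [Fintype n]

theorem posSemidef_pivotTerm {X : Matrix n n ℝ} (hX : X.PosSemidef) (v : n) :
    (X.pivotTerm v).PosSemidef := by
  simpa [pivotTerm] using
    (posSemidef_vecMulVec_self_star (X v)).smul (inv_nonneg.mpr hX.diag_nonneg)

variable [DecidableEq n]

theorem PosSemidef.apply_eq_zero_of_apply_self_eq_zero {X : Matrix n n ℝ} (hX : X.PosSemidef)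
    {v : n} (hv : X v v = 0) (j : n) : X v j = 0 := by
  have hcol : X *ᵥ Pi.single v 1 = 0 :=
    (hX.dotProduct_mulVec_zero_iff _).mp (by simpa [mulVec_single_one] using hv)
  rw [← hX.isHermitian.apply v j, star_trivial]
  simpa [mulVec_single_one] using congrFun hcol j

/-- The Schur complement is the congruence `Pᵀ X P` by the elimination matrix
`P = 1 - e_v X_vᵀ / X_vv`. -/
theorem PosSemidef.sub_pivotTerm {X : Matrix n n ℝ} (hX : X.PosSemidef) (v : n) :
    (X - X.pivotTerm v).PosSemidef := by
  set P : Matrix n n ℝ := 1 - (X v v)⁻¹ • vecMulVec (Pi.single v 1) (X v)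
  have hcongr : Pᴴ * X * P = X - X.pivotTerm v := by
    ext i j
    simp [P, pivotTerm_apply, conjTranspose_eq_transpose_of_trivial, mul_apply,
      vecMulVec_apply, Pi.single_apply, sub_mul, mul_sub, Finset.sum_sub_distrib, one_apply]
    rw [← hX.isHermitian.apply i v, star_trivial]
    rcases eq_or_ne (X v v) 0 with hv | hv
    · simp [hv]
    · field_simp
      ring
  exact hcongr ▸ hX.conjTranspose_mul_mul_same P

theorem PosSemidef.sub_pivotTerm_apply_self_left {X : Matrix n n ℝ} (hX : X.PosSemidef)
    (v j : n) : (X - X.pivotTerm v) v j = 0 := by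
  rw [sub_apply, pivotTerm_apply]
  by_cases hv : X v v = 0
  · simp [hv, hX.apply_eq_zero_of_apply_self_eq_zero hv j]
  · field_simp
    ring

end Matrix

theorem Finset.sum_coe_sort_ite_eq {V M : Type*} [DecidableEq V] [AddCommMonoid M]
    {C : Finset V} (f : C → M) (j : V) :
    ∑ r : C, (if (r : V) = j then f r else 0) = if h : j ∈ C then f ⟨j, h⟩ else 0 := by
  split_ifs with h
  · rw [Fintype.sum_eq_single ⟨j, h⟩ fun r hr => if_neg fun h' => hr (Subtype.ext h'),
      if_pos rfl]
  · exact Fintype.sum_eq_zero _ fun r => if_neg fun h' : (r : V) = j => h (h' ▸ r.2)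

section CliqueEmbed

variable {V : Type*} [Fintype V] [DecidableEq V]

/-- The matrix `E_C`. -/
def cliqueSelector (C : Finset V) : Matrix C V ℝ :=
  Matrix.of fun r j => if (r : V) = j then 1 else 0

theorem cliqueEmbed_eq_transpose_mul_mul (C : Finset V) (Y : Matrix C C ℝ) :
    cliqueEmbed C Y = (cliqueSelector C)ᵀ * Y * cliqueSelector C := by
  ext i j
  simp only [cliqueSelector, mul_apply, transpose_apply, of_apply, ite_mul, one_mul, zero_mul,
    mul_ite, mul_one, mul_zero, Finset.sum_coe_sort_ite_eq]
  by_cases hi : i ∈ C <;> by_cases hj : j ∈ C <;> simp [cliqueEmbed, hi, hj]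

theorem posSemidef_cliqueEmbed (C : Finset V) {Y : Matrix C C ℝ} (hY : Y.PosSemidef) :
    (cliqueEmbed C Y).PosSemidef := by
  rw [cliqueEmbed_eq_transpose_mul_mul, ← conjTranspose_eq_transpose_of_trivial]
  exact hY.conjTranspose_mul_mul_same _

theorem cliqueEmbed_zero (C : Finset V) : cliqueEmbed C 0 = 0 := by
  simp [cliqueEmbed_eq_transpose_mul_mul]

theorem cliqueEmbed_add (C : Finset V) (Y Z : Matrix C C ℝ) :
    cliqueEmbed C (Y + Z) = cliqueEmbed C Y + cliqueEmbed C Z := by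
  simp only [cliqueEmbed_eq_transpose_mul_mul, Matrix.mul_add, Matrix.add_mul]

theorem cliqueEmbed_apply (C : Finset V) (Y : Matrix C C ℝ) (i j : V) :
    cliqueEmbed C Y i j = if h : i ∈ C ∧ j ∈ C then Y ⟨i, h.1⟩ ⟨j, h.2⟩ else 0 := by
  by_cases hi : i ∈ C <;> by_cases hj : j ∈ C <;> simp [cliqueEmbed, hi, hj]

theorem mem_of_cliqueEmbed_apply_ne_zero {C : Finset V} {Y : Matrix C C ℝ} {i j : V}
    (h : cliqueEmbed C Y i j ≠ 0) : i ∈ C ∧ j ∈ C := by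
  by_contra h'
  rw [cliqueEmbed_apply, dif_neg h'] at h
  exact h rfl

theorem cliqueEmbed_submatrix {C : Finset V} {M : Matrix V V ℝ}
    (hM : ∀ i j, M i j ≠ 0 → i ∈ C ∧ j ∈ C) : cliqueEmbed C (M.submatrix (↑) (↑)) = M := by
  ext i j
  rw [cliqueEmbed_apply]
  split_ifs with h
  · rfl
  · exact by_contra fun h' => h (hM i j (Ne.symm h'))

end CliqueEmbed

section CliqueSums

variable {V : Type*} [Fintype V] [DecidableEq V] {G : SimpleGraph V}

def cliquePSDSums (G : SimpleGraph V) : AddSubmonoid (Matrix V V ℝ) :=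
  AddSubmonoid.closure {M | ∃ C : Finset V, G.IsClique (C : Set V) ∧
    ∃ Y : Matrix C C ℝ, Y.PosSemidef ∧ cliqueEmbed C Y = M}

theorem cliqueEmbed_mem_cliquePSDSums {C : Finset V} (hC : G.IsClique (C : Set V))
    {Y : Matrix C C ℝ} (hY : Y.PosSemidef) : cliqueEmbed C Y ∈ cliquePSDSums G :=
  AddSubmonoid.subset_closure ⟨C, hC, Y, hY, rfl⟩

theorem pivotTerm_mem_cliquePSDSums {X : Matrix V V ℝ} (hX : X.PosSemidef) {v : V}
    {K : Finset V} (hK : G.IsClique (K : Set V)) (hrow : ∀ i, X v i ≠ 0 → i ∈ K) :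
    X.pivotTerm v ∈ cliquePSDSums G := by
  rw [← cliqueEmbed_submatrix (M := X.pivotTerm v) fun i j h =>
    (pivotTerm_apply_ne_zero h).imp (hrow i) (hrow j)]
  exact cliqueEmbed_mem_cliquePSDSums hK ((posSemidef_pivotTerm hX v).submatrix _)

/-- Pivot on a vertex `v` simplicial in the support `T`: the pivot term lives on the clique
`{v} ∪ (N(v) ∩ T)`, the Schur complement has the sparsity of `X` and support `T \ {v}`. -/
theorem IsChordal.mem_cliquePSDSums_of_support (hG : IsChordal G) (T : Finset V)
    {X : Matrix V V ℝ} (hX : X.PosSemidef) (hsparse : ∀ i j, i ≠ j → ¬ G.Adj i j → X i j = 0)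
    (hT : ∀ i ∉ T, ∀ j, X i j = 0) : X ∈ cliquePSDSums G := by
  classical
  induction T using Finset.strongInduction generalizing X with | H T ih =>
  rcases T.eq_empty_or_nonempty with rfl | hne
  · obtain rfl : X = 0 := by ext i j; exact hT i (Finset.notMem_empty i) j
    exact zero_mem _
  obtain ⟨v, hv, hsimp⟩ := hG.exists_simplicial hne
  have hsymm (i j : V) : X j i = X i j := by rw [← hX.isHermitian.apply i j, star_trivial]
  set K := insert v (T.filter (G.Adj v))
  have hK : G.IsClique (K : Set V) := by
    have hN : {w ∈ (T : Set V) | G.Adj v w} ⊆ G.neighborSet v ∩ T := fun w hw => ⟨hw.2, hw.1⟩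
    rw [Finset.coe_insert, Finset.coe_filter]
    exact (hsimp.subset hN).insert fun w hw _ => hw.2
  have hrow (i : V) (h : X v i ≠ 0) : i ∈ K := by
    rcases eq_or_ne i v with rfl | hiv
    · exact Finset.mem_insert_self _ _
    refine Finset.mem_insert_of_mem (Finset.mem_filter.mpr ⟨?_, ?_⟩)
    · exact by_contra fun hi => h (by rw [← hsymm]; exact hT i hi v)
    · exact by_contra fun hadj => h (hsparse v i hiv.symm hadj)
  rw [← sub_add_cancel X (X.pivotTerm v)]
  refine add_mem (ih _ (T.erase_ssubset hv) (hX.sub_pivotTerm v) (fun i j hij hnadj => ?_)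
    fun i hi j => ?_) (pivotTerm_mem_cliquePSDSums hX hK hrow)
  · rw [Matrix.sub_apply, hsparse i j hij hnadj, zero_sub, neg_eq_zero]
    by_contra h
    obtain ⟨hi, hj⟩ := pivotTerm_apply_ne_zero h
    exact hnadj (hK (hrow i hi) (hrow j hj) hij)
  · rcases eq_or_ne i v with rfl | hiv
    · exact hX.sub_pivotTerm_apply_self_left i j
    have hiT : i ∉ T := fun h => hi (Finset.mem_erase.mpr ⟨hiv, h⟩)
    rw [Matrix.sub_apply, pivotTerm_apply, hT i hiT j, ← hsymm v i, hT i hiT v]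
    simp

theorem exists_eq_sum_cliqueEmbed_of_mem {p : ℕ} {C : Fin p → Finset V}
    (hall : ∀ s : Set V, G.IsClique s → (∀ t : Set V, G.IsClique t → s ⊆ t → t = s) →
      ∃ k, s = (C k : Set V))
    {X : Matrix V V ℝ} (hX : X ∈ cliquePSDSums G) :
    ∃ Y : ∀ k, Matrix (C k) (C k) ℝ, (∀ k, (Y k).PosSemidef) ∧
      X = ∑ k, cliqueEmbed (C k) (Y k) := by
  induction hX using AddSubmonoid.closure_induction with
  | mem M hM =>
    obtain ⟨D, hD, Y, hY, rfl⟩ := hM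
    obtain ⟨k, hk⟩ := G.exists_subset_of_isClique hall hD
    refine ⟨Pi.single k ((cliqueEmbed D Y).submatrix (↑) (↑)), fun l => ?_, ?_⟩
    · rcases eq_or_ne l k with rfl | hl
      · rw [Pi.single_eq_same]
        exact (posSemidef_cliqueEmbed D hY).submatrix _
      · rw [Pi.single_eq_of_ne hl]
        exact PosSemidef.zero
    · rw [Finset.sum_eq_single k (fun l _ hl => by rw [Pi.single_eq_of_ne hl, cliqueEmbed_zero])
        (by simp), Pi.single_eq_same, cliqueEmbed_submatrix]
      exact fun i j h => (mem_of_cliqueEmbed_apply_ne_zero h).imp (@hk i) (@hk j)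
  | zero => exact ⟨0, fun _ => PosSemidef.zero, by simp [cliqueEmbed_zero]⟩
  | add M N _ _ hM hN =>
    obtain ⟨Y, hY, rfl⟩ := hM
    obtain ⟨Z, hZ, rfl⟩ := hN
    exact ⟨Y + Z, fun k => (hY k).add (hZ k), by simp [cliqueEmbed_add, Finset.sum_add_distrib]⟩

end CliqueSums

theorem chordal_psd_decomposition_general {V : Type*} [Fintype V] [DecidableEq V]
    (G : SimpleGraph V) (hchordal : IsChordal G)
    (p : ℕ) (C : Fin p → Finset V)
    (hall : ∀ s : Set V, G.IsClique s → (∀ t : Set V, G.IsClique t → s ⊆ t → t = s) →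
      ∃ k, s = (C k : Set V))
    (X : Matrix V V ℝ)
    (hsparse : ∀ i j, i ≠ j → ¬ G.Adj i j → X i j = 0) :
    X.PosSemidef ↔
      ∃ Y : ∀ k, Matrix (C k) (C k) ℝ,
        (∀ k, (Y k).PosSemidef) ∧ X = ∑ k, cliqueEmbed (C k) (Y k) := by
  refine ⟨fun hX => exists_eq_sum_cliqueEmbed_of_mem hall ?_, ?_⟩
  · exact hchordal.mem_cliquePSDSums_of_support Finset.univ hX hsparse
      fun i hi => absurd (Finset.mem_univ i) hi
  · rintro ⟨Y, hY, rfl⟩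
    exact posSemidef_sum _ fun k _ => posSemidef_cliqueEmbed _ (hY k)

/-- Agler–Helton–McCullough–Rodman chordal decomposition: a symmetric matrix with the
sparsity pattern of a chordal graph `G` with maximal cliques `C_1, …, C_p` is PSD iff it
decomposes as a sum `Σ_k E_kᵀ X_k E_k` of PSD matrices supported on the cliques. -/
theorem chordal_psd_decomposition {V : Type*} [Fintype V] [DecidableEq V]
    (G : SimpleGraph V) (hchordal : IsChordal G)
    (p : ℕ) (C : Fin p → Finset V)
    (hclique : ∀ k, G.IsClique (C k : Set V))
    (hmaximal : ∀ k, ∀ s : Set V, G.IsClique s → (C k : Set V) ⊆ s → s = (C k : Set V))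
    (hall : ∀ s : Set V, G.IsClique s → (∀ t : Set V, G.IsClique t → s ⊆ t → t = s) →
      ∃ k, s = (C k : Set V))
    (X : Matrix V V ℝ) (hXsymm : X.IsSymm)
    (hsparse : ∀ i j, i ≠ j → ¬ G.Adj i j → X i j = 0) :
    X.PosSemidef ↔
      ∃ Y : ∀ k, Matrix (C k) (C k) ℝ,
        (∀ k, (Y k).PosSemidef) ∧ X = ∑ k, cliqueEmbed (C k) (Y k) :=
  chordal_psd_decomposition_general G hchordal p C hall X hsparse
end
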